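/- arXiv:1410.7937 — 7 statements merged into one kernel-verified Lean document; each statement's English description precedes it below -/
import Mathlib

section
/- Suppose a group G has an infinite virtually cyclic normal subgroup V₁ with infinite virtually cyclic quotient G/V₁. Then G contains a free abelian normal subgroup of rank 2 of finite index. -/
/-!
Choose `c ∈ V₁` generating a cyclic subgroup of finite index in `V₁`. Some fixed power `c ^ e`
lies in every conjugate of `⟨c⟩`, so the normal core of `⟨c⟩` in `G` is an infinite cyclic
normal subgroup `⟨y⟩` of finite index in `V₁`. As `Aut ℤ` is finite, the centralizer of `⟨y⟩`
has finite index in `G`; its image in `G ⧸ V₁` therefore contains an element `π s`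
generating an infinite cyclic subgroup of finite index. Now `y` and `s` commute and are
independent, so they generate a copy `A` of `ℤ²`, and `A` has finite index in `G` because
`A ∩ V₁ ⊇ ⟨y⟩` and `π A ⊇ ⟨π s⟩`. The normal core of `A` is a finite-index subgroup of `ℤ²`,
hence again free abelian of rank 2.
-/

/-- A group is virtually cyclic if it has a cyclic subgroup of finite index. -/
def VirtuallyCyclic (G : Type*) [Group G] : Prop :=
  ∃ H : Subgroup G, IsCyclic H ∧ H.FiniteIndex

open Subgroup

section

variable {G G' : Type*} [Group G] [Group G']

theorem AddSubgroup.nonempty_addEquiv_of_finiteIndex {M : Type*} [AddCommGroup M]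
    [Module.Free ℤ M] [Module.Finite ℤ M] (A : AddSubgroup M) [A.FiniteIndex] :
    Nonempty (A ≃+ M) := by
  have h : Module.finrank ℤ A.toIntSubmodule = Module.finrank ℤ M :=
    A.finrank_eq_of_finiteIndex
  exact ⟨(LinearEquiv.ofFinrankEq (R := ℤ) A.toIntSubmodule M h).toAddEquiv⟩

namespace Subgroup

theorem relIndex_eq_ncard_image (H K : Subgroup G) :
    H.relIndex K = ((QuotientGroup.mk : G → G ⧸ H) '' K).ncard := by
  have hsmul (k : K) : k • ((1 : G) : G ⧸ H) = (k : G) :=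
    congrArg QuotientGroup.mk (mul_one (k : G))
  have hstab : MulAction.stabilizer K ((1 : G) : G ⧸ H) = H.subgroupOf K := by
    ext k; simp [hsmul, mem_subgroupOf, QuotientGroup.eq]
  have horb : MulAction.orbit K ((1 : G) : G ⧸ H) = (QuotientGroup.mk : G → G ⧸ H) '' K := by
    ext x; simp [MulAction.mem_orbit_iff, hsmul]
  rw [relIndex, ← hstab, MulAction.index_stabilizer, horb]

theorem relIndex_sup_right_of_normal (H N : Subgroup G) [N.Normal] :
    H.relIndex (H ⊔ N) = H.relIndex N := by
  rw [relIndex_eq_ncard_image, relIndex_eq_ncard_image, sup_comm, normal_mul]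
  congr 1
  ext x
  simp only [Set.mem_image, Set.mem_mul, SetLike.mem_coe]
  constructor
  · rintro ⟨_, ⟨n, hn, h, hh, rfl⟩, rfl⟩
    exact ⟨n, hn, (QuotientGroup.mk_mul_of_mem n hh).symm⟩
  · rintro ⟨n, hn, rfl⟩
    exact ⟨n, ⟨n, hn, 1, H.one_mem, mul_one n⟩, rfl⟩

theorem index_eq_relIndex_ker_mul_index_map {f : G →* G'} (hf : Function.Surjective f)
    (H : Subgroup G) : H.index = H.relIndex f.ker * (H.map f).index := by
  rw [← relIndex_mul_index (le_sup_left : H ≤ H ⊔ f.ker), relIndex_sup_right_of_normal,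
    index_map, f.range_eq_top_of_surjective hf, index_top, mul_one]

theorem relIndex_zpowers_ne_zero_of_zpow_mem {H : Subgroup G} {g : G} {n : ℤ} (hn : n ≠ 0)
    (hg : g ^ n ∈ H) : H.relIndex (zpowers g) ≠ 0 := by
  have hle : zpowers (Multiplicative.ofAdd n) ≤ H.comap (zpowersHom G g) :=
    zpowers_le.mpr (by simpa using hg)
  have hn' : (zpowers (Multiplicative.ofAdd n)).index ≠ 0 := by
    change (AddSubgroup.toSubgroup (AddSubgroup.zmultiples n)).index ≠ 0
    rwa [AddSubgroup.index_toSubgroup, Int.index_zmultiples, Int.natAbs_ne_zero]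
  rw [← range_zpowersHom, ← index_comap]
  exact ne_zero_of_dvd_ne_zero hn' (index_dvd_of_le hle)

theorem exists_pow_mem_normalCore {H V : Subgroup G} [V.Normal] (hHV : H.relIndex V ≠ 0) :
    ∃ e : ℕ, e ≠ 0 ∧ ∀ v ∈ V, v ^ e ∈ H.normalCore := by
  have : (H.subgroupOf V).FiniteIndex := ⟨hHV⟩
  refine ⟨(H.subgroupOf V).normalCore.index, FiniteIndex.index_ne_zero, fun v hv g => ?_⟩
  have hw : g * v * g⁻¹ ∈ V := ‹V.Normal›.conj_mem v hv g
  have := normalCore_le _ (pow_index_mem (H.subgroupOf V).normalCore (⟨_, hw⟩ : V))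
  rw [← conj_pow]
  simpa [mem_subgroupOf] using this

theorem finiteIndex_centralizer_of_finite_mulAut (N : Subgroup G) [N.Normal]
    [Finite (MulAut N)] : (centralizer (N : Set G)).FiniteIndex := by
  have : (MulAut.conjNormal (H := N)).ker = centralizer (N : Set G) := by
    ext g
    simp [MonoidHom.mem_ker, mem_centralizer_iff, MulEquiv.ext_iff, Subtype.ext_iff,
      eq_mul_inv_iff_mul_eq, eq_comm]
  rw [← this]
  infer_instance

theorem not_isOfFinOrder_of_relIndex_ne_zero {K : Subgroup G} [Infinite K] {g : G}
    (h : (zpowers g).relIndex K ≠ 0) : ¬IsOfFinOrder g := by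
  intro hg
  have : Finite (zpowers g) := hg.finite_zpowers
  have : Finite ((zpowers g).subgroupOf K) :=
    Finite.of_injective (fun x ↦ (⟨x, x.2⟩ : zpowers g))
      fun _ _ hxy ↦ Subtype.ext (Subtype.ext (congrArg Subtype.val hxy :))
  exact not_finite_iff_infinite.mpr ‹_› ((finite_iff_finite_and_finiteIndex _).mpr ⟨this, ⟨h⟩⟩)

section FreeAbelian

variable {M : Type*} [AddCommGroup M] [Module.Free ℤ M] [Module.Finite ℤ M]

theorem nonempty_mulEquiv_of_finiteIndex (K : Subgroup (Multiplicative M)) [K.FiniteIndex] :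
    Nonempty (K ≃* Multiplicative M) := by
  let A : AddSubgroup M := AddSubgroup.toSubgroup.symm K
  have : A.FiniteIndex := by
    rw [← AddSubgroup.finiteIndex_toSubgroup_iff]
    simpa [A]
  obtain ⟨e⟩ := A.nonempty_addEquiv_of_finiteIndex
  -- `↥K` and `Multiplicative ↥A` are definitionally equal
  exact ⟨(MulEquiv.refl K).trans (AddEquiv.toMultiplicative e)⟩

theorem nonempty_mulEquiv_of_le_of_finiteIndex {A N : Subgroup G} (hNA : N ≤ A) [N.FiniteIndex]
    (e : A ≃* Multiplicative M) : Nonempty (N ≃* Multiplicative M) := by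
  have : ((N.subgroupOf A).map (e : A →* Multiplicative M)).FiniteIndex :=
    ⟨by rw [index_map_equiv]; exact FiniteIndex.index_ne_zero⟩
  obtain ⟨f⟩ := nonempty_mulEquiv_of_finiteIndex ((N.subgroupOf A).map (e : A →* Multiplicative M))
  exact ⟨((subgroupOfEquivOfLe hNA).symm.trans (e.subgroupMap _)).trans f⟩

end FreeAbelian

end Subgroup

theorem Commute.exists_mulEquiv_multiplicative_prod {x y : G} (hxy : Commute x y) {f : G →* G'}
    (hfx : f x = 1) (hx : ¬IsOfFinOrder x) (hfy : ¬IsOfFinOrder (f y)) :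
    ∃ A : Subgroup G, x ∈ A ∧ y ∈ A ∧ Nonempty (A ≃* Multiplicative (ℤ × ℤ)) := by
  let φ : Multiplicative (ℤ × ℤ) →* G :=
    ((zpowersHom G x).noncommCoprod (zpowersHom G y) fun _ _ ↦ hxy.zpow_zpow _ _).comp
      (MulEquiv.prodMultiplicative ℤ ℤ).toMonoidHom
  have hφ (a b : ℤ) : φ (Multiplicative.ofAdd (a, b)) = x ^ a * y ^ b := rfl
  have hinj : Function.Injective φ := by
    refine (injective_iff_map_eq_one φ).mpr fun p hp ↦ ?_
    obtain ⟨a, b⟩ := p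
    change φ (Multiplicative.ofAdd (a, b)) = 1 at hp
    rw [hφ] at hp
    have hb : b = 0 := by
      by_contra hb
      refine hfy (isOfFinOrder_iff_zpow_eq_one.mpr ⟨b, hb, ?_⟩)
      simpa [hfx] using congrArg f hp
    subst hb
    have ha : a = 0 := by
      by_contra ha
      exact hx (isOfFinOrder_iff_zpow_eq_one.mpr ⟨a, ha, by simpa using hp⟩)
    subst ha
    rfl
  exact ⟨φ.range, ⟨_, hφ 1 0 |>.trans (by simp)⟩, ⟨_, hφ 0 1 |>.trans (by simp)⟩,
    ⟨(MonoidHom.ofInjective hinj).symm⟩⟩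

namespace VirtuallyCyclic

theorem exists_mem_zpowers_finiteIndex {Q : Type*} [Group Q] (h : VirtuallyCyclic Q)
    (H : Subgroup Q) [H.FiniteIndex] : ∃ q ∈ H, (zpowers q).FiniteIndex := by
  obtain ⟨C, hC, hCfin⟩ := h
  have : IsCyclic ↥(C ⊓ H) := isCyclic_of_le inf_le_left
  obtain ⟨q, hq⟩ := (C ⊓ H).isCyclic_iff_exists_zpowers_eq_top.mp this
  exact ⟨q, (hq ▸ mem_zpowers q : q ∈ C ⊓ H).2, hq ▸ inferInstance⟩

theorem exists_normal_zpowers_relIndex_ne_zero {V : Subgroup G} [V.Normal]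
    (h : VirtuallyCyclic V) : ∃ y ∈ V, (zpowers y).Normal ∧ (zpowers y).relIndex V ≠ 0 := by
  obtain ⟨c, -, hc⟩ := h.exists_mem_zpowers_finiteIndex ⊤
  have hcV : (zpowers (c : G)).relIndex V ≠ 0 := by
    rw [← V.coe_subtype, ← MonoidHom.map_zpowers, relIndex, subgroupOf,
      comap_map_eq_self_of_injective V.subtype_injective]
    exact hc.index_ne_zero
  obtain ⟨e, he, hpow⟩ := exists_pow_mem_normalCore hcV
  have : IsCyclic (zpowers (c : G)).normalCore := isCyclic_of_le (normalCore_le _)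
  obtain ⟨y, hy⟩ := (zpowers (c : G)).normalCore.isCyclic_iff_exists_zpowers_eq_top.mp this
  have hyc : zpowers y ≤ zpowers (c : G) := hy ▸ normalCore_le _
  have hcy : (c : G) ^ (e : ℤ) ∈ zpowers y := by
    rw [zpow_natCast, hy]
    exact hpow c c.2
  refine ⟨y, zpowers_le.mpr c.2 (hyc (mem_zpowers y)), hy ▸ inferInstance, ?_⟩
  rw [← relIndex_mul_relIndex _ _ _ hyc (zpowers_le.mpr c.2)]
  exact mul_ne_zero (relIndex_zpowers_ne_zero_of_zpow_mem (by exact_mod_cast he) hcy) hcV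

end VirtuallyCyclic

end

/-- If `G` has an infinite virtually cyclic normal subgroup `V₁` with
infinite virtually cyclic quotient `G ⧸ V₁`, then `G` contains a free abelian normal
subgroup of rank 2 (i.e. isomorphic to `ℤ × ℤ`) of finite index. -/
theorem exists_rank_two_free_abelian_normal_of_finiteIndex
    (G : Type*) [Group G] (V₁ : Subgroup G) [V₁.Normal]
    (h₁ : VirtuallyCyclic V₁) (h₁' : Infinite V₁)
    (h₂ : VirtuallyCyclic (G ⧸ V₁)) (h₂' : Infinite (G ⧸ V₁)) :
    ∃ N : Subgroup G, N.Normal ∧ N.FiniteIndex ∧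
      Nonempty (N ≃* Multiplicative (ℤ × ℤ)) := by
  let π := QuotientGroup.mk' V₁
  have hπ : Function.Surjective π := QuotientGroup.mk'_surjective V₁
  obtain ⟨y, hyV, hYnormal, hYV⟩ := h₁.exists_normal_zpowers_relIndex_ne_zero
  have hy : ¬IsOfFinOrder y := not_isOfFinOrder_of_relIndex_ne_zero hYV
  have : Finite (MulAut (zpowers y)) := .of_equiv _ (IsCyclic.mulAutMulEquiv _).symm.toEquiv
  have : ((centralizer (zpowers y : Set G)).map π).FiniteIndex :=
    ⟨ne_zero_of_dvd_ne_zero (finiteIndex_centralizer_of_finite_mulAut _).index_ne_zero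
      (index_map_dvd _ hπ)⟩
  obtain ⟨_, ⟨s, hsC, rfl⟩, hs⟩ :=
    h₂.exists_mem_zpowers_finiteIndex ((centralizer (zpowers y : Set G)).map π)
  have hs' : ¬IsOfFinOrder (π s) := by
    have : Infinite (⊤ : Subgroup (G ⧸ V₁)) := topEquiv.toEquiv.infinite_iff.mpr h₂'
    exact not_isOfFinOrder_of_relIndex_ne_zero (K := ⊤) (by simpa using hs.index_ne_zero)
  have hys : Commute y s := mem_centralizer_iff.mp hsC y (mem_zpowers y)
  obtain ⟨A, hyA, hsA, ⟨e⟩⟩ :=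
    hys.exists_mulEquiv_multiplicative_prod ((QuotientGroup.eq_one_iff y).mpr hyV) hy hs'
  have : A.FiniteIndex := by
    rw [finiteIndex_iff, index_eq_relIndex_ker_mul_index_map hπ, QuotientGroup.ker_mk']
    exact mul_ne_zero
      (ne_zero_of_dvd_ne_zero hYV (relIndex_dvd_of_le_left _ (zpowers_le.mpr hyA)))
      (ne_zero_of_dvd_ne_zero hs.index_ne_zero
        (index_dvd_of_le (zpowers_le.mpr (mem_map_of_mem π hsA))))
  exact ⟨A.normalCore, inferInstance, inferInstance,
    nonempty_mulEquiv_of_le_of_finiteIndex (normalCore_le A) e⟩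
end

section
/- Let 1 → K → G → H → 1 be a short exact sequence of groups with K and H residually finite. Assume that every finite-index subgroup of K contains a subgroup K' that is normal in G and such that G/K' is residually finite. Then G is residually finite. -/
/-- A group is residually finite if every nontrivial element avoids some
finite-index normal subgroup. -/
def ResiduallyFinite (G : Type*) [Group G] : Prop :=
  ∀ g : G, g ≠ 1 → ∃ N : Subgroup G, N.Normal ∧ N.FiniteIndex ∧ g ∉ N

lemma pullback_aux {G Q : Type*} [Group G] [Group Q] (f : G →* Q)
    (hf : Function.Surjective f) (g : G) (hRF : ResiduallyFinite Q)
    (hg : f g ≠ 1) : ∃ N : Subgroup G, N.Normal ∧ N.FiniteIndex ∧ g ∉ N := by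
  obtain ⟨N, hN, hFI, hgN⟩ := hRF (f g) hg
  refine ⟨N.comap f, hN.comap f, ?_, ?_⟩
  · constructor
    rw [Subgroup.index_comap_of_surjective _ hf]
    exact hFI.index_ne_zero
  · simpa using hgN

/-- Let `1 → K → G → H → 1` be exact with `K` and `H ≅ G ⧸ K` residually
finite.  If every finite-index subgroup of `K` contains a subgroup `K'` normal in `G`
with `G ⧸ K'` residually finite, then `G` is residually finite. -/
theorem residuallyFinite_of_extension
    (G : Type*) [Group G] (K : Subgroup G) [K.Normal]
    (hK : ResiduallyFinite K) (hQ : ResiduallyFinite (G ⧸ K))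
    (h : ∀ H : Subgroup G, H ≤ K → (H.subgroupOf K).FiniteIndex →
      ∃ K' : Subgroup G, K' ≤ H ∧ ∃ hn : K'.Normal,
        @ResiduallyFinite (G ⧸ K') (@QuotientGroup.Quotient.group _ _ K' hn)) :
    ResiduallyFinite G := by
  intro g hg
  by_cases hgK : g ∈ K
  · -- g ∈ K, nontrivial
    obtain ⟨N, hNnorm, hNFI, hgN⟩ := hK ⟨g, hgK⟩ (by simpa using hg)
    have hmapK : N.map K.subtype ≤ K := by
      rintro x ⟨y, _, rfl⟩; exact y.2
    have hsub : (N.map K.subtype).subgroupOf K = N := by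
      rw [Subgroup.subgroupOf]
      exact Subgroup.comap_map_eq_self_of_injective K.subtype_injective N
    obtain ⟨K', hK'le, hn, hRF⟩ := h (N.map K.subtype) hmapK (by rw [hsub]; exact hNFI)
    have hgK' : g ∉ K' := by
      intro hmem
      have : g ∈ N.map K.subtype := hK'le hmem
      obtain ⟨y, hy, hyg⟩ := this
      have : y = ⟨g, hgK⟩ := Subtype.ext hyg
      exact hgN (this ▸ hy)
    exact pullback_aux (QuotientGroup.mk' K') (QuotientGroup.mk'_surjective K') g hRF
      (by simpa [QuotientGroup.eq_one_iff] using hgK')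
  · exact pullback_aux (QuotientGroup.mk' K) (QuotientGroup.mk'_surjective K) g hQ
      (by simpa [QuotientGroup.eq_one_iff] using hgK)
end

section
/- Let G be a normal subgroup of a group K with quotient H = K/G. Then K embeds into the wreath product G ≀ H = G^H ⋊ H, where H acts on the direct product G^H by permuting coordinates via left translation. -/
/-- The action of `H` on `H → G` permuting the coordinates by left translation. -/
def wreathAct (G H : Type*) [Group G] [Group H] : H →* MulAut (H → G) where
  toFun h :=
    { toFun := fun f x => f (h⁻¹ * x)
      invFun := fun f x => f (h * x)
      left_inv := fun f => funext fun x => by simp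
      right_inv := fun f => funext fun x => by simp
      map_mul' := fun f g => rfl }
  map_one' := by ext f x; simp
  map_mul' := fun a b => by ext f x; simp [mul_assoc]

/-- The (regular, unrestricted) wreath product `G ≀ H = G^H ⋊ H`. -/
abbrev Wreath (G H : Type*) [Group G] [Group H] : Type _ :=
  (H → G) ⋊[wreathAct G H] H

/-!
Take the transversal `s = Quotient.out : K ⧸ G → K` and write `π : K → K ⧸ G`. Send `k` to
`(x ↦ (s x)⁻¹ * k * s ((π k)⁻¹ * x), π k)`: each coordinate lies in `G` because `k` maps the coset
`π k⁻¹ * x` to `x`, and for a product the words telescope, which is exactly the multiplication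
rule of `G^H ⋊ H`. If `k` maps to `1`, then `π k = 1` and the coordinate at `1` is `k` conjugated
by `s 1`, so `k = 1`.
-/

@[simp]
lemma wreathAct_apply {G H : Type*} [Group G] [Group H] (h : H) (f : H → G) (x : H) :
    wreathAct G H h f x = f (h⁻¹ * x) :=
  rfl

namespace KaloujnineKrasner

variable {K : Type*} [Group K] (G : Subgroup K) [G.Normal]

noncomputable def base (k : K) (x : K ⧸ G) : G :=
  ⟨x.out⁻¹ * k * ((k : K ⧸ G)⁻¹ * x).out, by
    rw [← QuotientGroup.eq_one_iff]
    simp⟩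

@[simp]
lemma coe_base (k : K) (x : K ⧸ G) :
    (base G k x : K) = x.out⁻¹ * k * ((k : K ⧸ G)⁻¹ * x).out :=
  rfl

lemma base_one : base G 1 = 1 := by
  ext x
  simp

lemma base_mul (k₁ k₂ : K) (x : K ⧸ G) :
    base G (k₁ * k₂) x = base G k₁ x * base G k₂ ((k₁ : K ⧸ G)⁻¹ * x) := by
  ext
  simp only [coe_base, Subgroup.coe_mul, QuotientGroup.mk_mul, mul_inv_rev, mul_assoc,
    mul_inv_cancel_left]

noncomputable def embedding : K →* Wreath G (K ⧸ G) where
  toFun k := ⟨base G k, k⟩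
  map_one' := by ext <;> simp [base_one]
  map_mul' k₁ k₂ := by ext <;> simp [base_mul]

lemma embedding_injective : Function.Injective (embedding G) := by
  refine (injective_iff_map_eq_one _).2 fun k hk => ?_
  have hk_right : (k : K ⧸ G) = 1 := congrArg SemidirectProduct.right hk
  have hbase : (base G k 1 : K) = 1 := congrArg (fun w => (w.left 1 : K)) hk
  rwa [coe_base, hk_right, inv_one, one_mul, mul_assoc, inv_mul_eq_one, right_eq_mul] at hbase

end KaloujnineKrasner

/-- Kaloujnine–Krasner: If `G` is a normal subgroup of `K` with quotient
`H = K ⧸ G`, then `K` embeds into the wreath product `G ≀ H = G^H ⋊ H`. -/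
theorem kaloujnine_krasner_embedding
    (K : Type*) [Group K] (G : Subgroup K) [G.Normal] :
    ∃ φ : K →* Wreath G (K ⧸ G), Function.Injective φ :=
  ⟨KaloujnineKrasner.embedding G, KaloujnineKrasner.embedding_injective G⟩
end

section
/- Let G be a group, H and L groups, and consider the iterated wreath product (G ≀ H) ≀ L. Then (G ≀ H) ≀ L is isomorphic to G^{H × L} ⋊ (H ≀ L) for a suitable action of H ≀ L on G^{H × L}. -/
/-! An element of `(G ≀ H) ≀ L` is a family `(g_l, h_l)_{l ∈ L}` in `G^H ⋊ H` together with a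
translation in `L`. Regrouping it as `(fun (h, l) ↦ g_l h) ∈ G^{H × L}` and `((h_l)_l, l) ∈ H ≀ L`
is a bijection, and multiplication in `(G ≀ H) ≀ L` becomes that of the semidirect product in which
`H ≀ L` acts on `G^{H × L}` by permuting coordinates through its natural action on `H × L`. -/

theorem mulAutArrow_apply_apply_eq {K A M : Type*} [Group K] [MulAction K A] [Monoid M]
    (k : K) (F : A → M) (a : A) : mulAutArrow k F a = F (k⁻¹ • a) :=
  rfl

namespace Wreath

variable {G H L : Type*} [Group G] [Group H] [Group L]

instance : SMul (Wreath H L) (H × L) :=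
  ⟨fun w p => (w.left (w.right * p.2) * p.1, w.right * p.2)⟩

theorem smul_def (w : Wreath H L) (p : H × L) :
    w • p = (w.left (w.right * p.2) * p.1, w.right * p.2) :=
  rfl

instance : MulAction (Wreath H L) (H × L) where
  one_smul p := by simp [smul_def]
  mul_smul a b p := by simp [smul_def, wreathAct, mul_assoc]

@[simp]
theorem inv_smul_def (w : Wreath H L) (p : H × L) :
    w⁻¹ • p = ((w.left p.2)⁻¹ * p.1, w.right⁻¹ * p.2) := by
  simp [smul_def, wreathAct]

def iteratedEquiv : Wreath (Wreath G H) L ≃* (H × L → G) ⋊[mulAutArrow] Wreath H L where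
  toFun w := ⟨fun p => (w.left p.2).left p.1, ⟨fun l => (w.left l).right, w.right⟩⟩
  invFun v := ⟨fun l => ⟨fun h => v.left (h, l), v.right.left l⟩, v.right.right⟩
  left_inv _ := rfl
  right_inv _ := rfl
  map_mul' a b := by
    ext p
    · simp only [SemidirectProduct.mul_left, Pi.mul_apply, mulAutArrow_apply_apply_eq, inv_smul_def]
      rfl
    all_goals rfl

end Wreath

/-- `(G ≀ H) ≀ L` is isomorphic to `G^{H × L} ⋊ (H ≀ L)` for a suitable
action of `H ≀ L` on `G^{H × L}`. -/
theorem iterated_wreath_iso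
    (G H L : Type*) [Group G] [Group H] [Group L] :
    ∃ act : Wreath H L →* MulAut (H × L → G),
      Nonempty (Wreath (Wreath G H) L ≃* (H × L → G) ⋊[act] Wreath H L) :=
  ⟨mulAutArrow, ⟨Wreath.iteratedEquiv⟩⟩
end

section
/- Let G be a finite-index normal subgroup of K with quotient F = K/G finite, and let L be any finite group. Then the wreath product K ≀ L embeds into a finite direct product of copies of G ≀ (F ≀ L); specifically, K ≀ L embeds in the product of |F × L| copies of G ≀ (F ≀ L). -/
section Aux

variable {K : Type*} [Group K] (G : Subgroup K) [G.Normal] {L : Type*} [Group L]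

/-- The coordinatewise quotient projection `K ≀ L → (K⧸G) ≀ L`. -/
def wreathProj : Wreath K L →* Wreath (K ⧸ G) L where
  toFun m := ⟨fun x => (m.left x : K ⧸ G), m.right⟩
  map_one' := by
    refine SemidirectProduct.ext ?_ rfl
    funext x
    simp [SemidirectProduct.one_left]
  map_mul' m m' := by
    refine SemidirectProduct.ext ?_ rfl
    funext x
    simp [SemidirectProduct.mul_left, wreathAct, -SemidirectProduct.mk_eq_inl_mul_inr]
    rfl

/-- A set-theoretic section of `wreathProj`. -/
noncomputable def wreathSec : Wreath (K ⧸ G) L → Wreath K L :=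
  fun w => ⟨fun x => (w.left x).out, w.right⟩

lemma wreathProj_sec (w : Wreath (K ⧸ G) L) : wreathProj G (wreathSec G w) = w := by
  refine SemidirectProduct.ext ?_ rfl
  funext x
  exact QuotientGroup.out_eq' _

/-- The Kaloujnine–Krasner "cocycle" element. -/
noncomputable def kkE (m : Wreath K L) (b : Wreath (K ⧸ G) L) : Wreath K L :=
  (wreathSec G b)⁻¹ * m * wreathSec G ((wreathProj G m)⁻¹ * b)

lemma proj_kkE (m : Wreath K L) (b : Wreath (K ⧸ G) L) :
    wreathProj G (kkE G m b) = 1 := by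
  simp only [kkE, map_mul, map_inv, wreathProj_sec]
  group

lemma kkE_right (m : Wreath K L) (b : Wreath (K ⧸ G) L) :
    (kkE G m b).right = 1 := by
  have h := proj_kkE G m b
  have : (wreathProj G (kkE G m b)).right = (1 : Wreath (K ⧸ G) L).right := by rw [h]
  exact this

lemma kkE_left_mem (m : Wreath K L) (b : Wreath (K ⧸ G) L) (x : L) :
    (kkE G m b).left x ∈ G := by
  have h := proj_kkE G m b
  have h2 : ((kkE G m b).left x : K ⧸ G) = 1 := by
    have : (wreathProj G (kkE G m b)).left x = (1 : Wreath (K ⧸ G) L).left x := by rw [h]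
    exact this
  exact (QuotientGroup.eq_one_iff _).mp h2

lemma kkE_mul (m m' : Wreath K L) (b : Wreath (K ⧸ G) L) :
    kkE G (m * m') b = kkE G m b * kkE G m' ((wreathProj G m)⁻¹ * b) := by
  simp only [kkE, map_mul, mul_inv_rev, mul_assoc]
  group

lemma left_mul_of_right_one {u v : Wreath K L} (h : u.right = 1) (x : L) :
    (u * v).left x = u.left x * v.left x := by
  rw [SemidirectProduct.mul_left, h]
  simp

/-- The Kaloujnine–Krasner style homomorphism at coordinate `x : L`. -/
noncomputable def kkHom (x : L) :
    Wreath K L →* Wreath G (Wreath (K ⧸ G) L) where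
  toFun m := ⟨fun b => ⟨(kkE G m b).left x, kkE_left_mem G m b x⟩, wreathProj G m⟩
  map_one' := by
    refine SemidirectProduct.ext ?_ (by simp)
    funext b
    refine Subtype.ext ?_
    have : kkE G 1 b = 1 := by simp [kkE]
    simp [this]
  map_mul' m m' := by
    refine SemidirectProduct.ext ?_ (by simp)
    funext b
    refine Subtype.ext ?_
    show (kkE G (m * m') b).left x
        = (kkE G m b).left x * (kkE G m' ((wreathProj G m)⁻¹ * b)).left x
    rw [kkE_mul G m m' b, left_mul_of_right_one (kkE_right G m b)]

lemma kkHom_injective : Function.Injective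
    (fun m => (fun x : L => kkHom G x m)) := by
  intro m m' h
  have key : ∀ x : L, kkHom G x m = kkHom G x m' := fun x => congrFun h x
  -- reduce to the kernel-triviality statement
  suffices hsuff : ∀ n : Wreath K L, (∀ x : L, kkHom G x n = 1) → n = 1 by
    have := hsuff (m * m'⁻¹) (fun x => by
      rw [map_mul, map_inv, key x, mul_inv_cancel])
    exact mul_inv_eq_one.mp this
  intro n hn
  have hπ : wreathProj G n = 1 := by
    have := congrArg SemidirectProduct.right (hn 1)
    exact this
  have hE : kkE G n 1 = 1 := by
    refine SemidirectProduct.ext ?_ (kkE_right G n 1)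
    funext x
    have := congrArg SemidirectProduct.left (hn x)
    have h2 := congrFun this 1
    have h3 : (⟨(kkE G n 1).left x, kkE_left_mem G n 1 x⟩ : G) = 1 := h2
    simpa using congrArg (Subtype.val) h3
  have : (wreathSec G 1)⁻¹ * n * wreathSec G 1 = 1 := by
    have := hE
    rwa [kkE, hπ, inv_one, one_mul] at this
  have := congrArg (fun z => wreathSec G 1 * z * (wreathSec G 1)⁻¹) this
  simpa [mul_assoc] using this

end Aux

/-- If `G` is a finite-index normal subgroup of `K` with finite quotient
`F = K ⧸ G` and `L` is a finite group, then `K ≀ L` embeds into the direct product of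
`|F × L|` copies of `G ≀ (F ≀ L)`. -/
theorem wreath_embeds_in_product_of_wreaths
    (K : Type*) [Group K] (G : Subgroup K) [G.Normal] [Finite (K ⧸ G)]
    (L : Type*) [Group L] [Finite L] :
    ∃ φ : Wreath K L →*
        (Fin (Nat.card ((K ⧸ G) × L)) → Wreath G (Wreath (K ⧸ G) L)),
      Function.Injective φ := by
  classical
  set n := Nat.card ((K ⧸ G) × L)
  -- an injection `L → Fin n`
  let e : (K ⧸ G) × L ≃ Fin n := Finite.equivFin _
  let ι : L → Fin n := fun x => e ((1 : K ⧸ G), x)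
  have hι : Function.Injective ι := by
    intro a b hab
    have := e.injective hab
    exact (Prod.mk.injEq _ _ _ _).mp this |>.2
  -- coordinate homomorphisms
  let c : Fin n → (Wreath K L →* Wreath G (Wreath (K ⧸ G) L)) := fun i =>
    if h : ∃ x : L, ι x = i then kkHom G h.choose
    else (SemidirectProduct.inr).comp (wreathProj G)
  refine ⟨Pi.monoidHom c, ?_⟩
  intro m m' h
  have key : ∀ x : L, kkHom G x m = kkHom G x m' := by
    intro x
    have hi : ∃ y : L, ι y = ι x := ⟨x, rfl⟩
    have hx : hi.choose = x := hι hi.choose_spec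
    have := congrFun h (ι x)
    simp only [Pi.monoidHom, MonoidHom.coe_mk, OneHom.coe_mk] at this
    have hc : c (ι x) = kkHom G x := by
      simp only [c, dif_pos hi, hx]
    have : c (ι x) m = c (ι x) m' := this
    rwa [hc] at this
  exact kkHom_injective G (funext key)
end

section
/- A free product of two residually finite groups is residually finite. -/
/-!
Let `x = g₀ g₁ ⋯ gₙ₋₁` be a nontrivial reduced word, the letter `gₖ` lying in the factor `G iₖ`,
and choose finite-index subgroups `Nₖ ≤ G iₖ` with `gₖ ∉ Nₖ`. Let `X` be the finite set consisting
of points `0, …, n` and the coset spaces `G iₖ ⧸ Nₖ`. For each factor `i` choose a permutation `τᵢ`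
of `X` sending, for every letter with `iₖ = i`, the coset `Nₖ` to the point `k + 1` and the coset
`gₖ Nₖ` to the point `k`; this is possible because consecutive letters lie in different factors
and `gₖ Nₖ ≠ Nₖ`. Let `G i` act on `X` by left multiplication on the coset spaces of its letters,
conjugated by `τᵢ`. Then `gₖ` moves the point `k + 1` to the point `k`, so `x` moves `n` to `0`
and survives in the finite group `Perm X`. The free product of two groups embeds in the free
product of a `Bool`-indexed family.
-/

universe u v w

open Function Equiv

theorem residuallyFinite_iff_group_residuallyFinite {G : Type*} [Group G] :
    ResiduallyFinite G ↔ Group.ResiduallyFinite G := by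
  rw [Group.residuallyFinite_iff_exists_finiteIndexNormalSubgroup]
  exact forall₂_congr fun g _ => ⟨fun ⟨N, _, _, hg⟩ => ⟨.ofSubgroup N, hg⟩,
    fun ⟨H, hg⟩ => ⟨H.toSubgroup, inferInstance, inferInstance, hg⟩⟩

theorem Group.ResiduallyFinite.of_injective {G H : Type*} [Group G] [Group H]
    [Group.ResiduallyFinite H] (f : G →* H) (hf : Injective f) : Group.ResiduallyFinite G := by
  refine Group.residuallyFinite_iff_forall_finiteIndexNormalSubgroup.mpr fun g hg => hf ?_
  rw [map_one]
  exact Group.eq_one_iff_forall_finiteIndexNormalSubroup _ fun K => hg (K.comap f)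

instance {G : Type*} [Group G] [Group.ResiduallyFinite G] : Group.ResiduallyFinite (ULift G) :=
  .of_injective (MulEquiv.ulift : ULift G ≃* G).toMonoidHom MulEquiv.ulift.injective

theorem List.prod_ofFn_smul_last {M α : Type*} [Monoid M] [MulAction M α] {n : ℕ}
    (p : Fin n → M) (f : Fin (n + 1) → α) (h : ∀ k, p k • f k.succ = f k.castSucc) :
    (List.ofFn p).prod • f (Fin.last n) = f 0 := by
  induction n with
  | zero => simp
  | succ n ih =>
    rw [List.ofFn_succ, List.prod_cons, mul_smul, ← Fin.succ_last,
      ih (fun k => p k.succ) (fun k => f k.succ) fun k => by rw [h, Fin.succ_castSucc]]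
    exact h 0

namespace Monoid.CoprodI

variable {ι : Type*} {G : ι → Type v} [∀ i, Group (G i)]

section Ladder

variable {n : ℕ} (idx : Fin n → ι) (N : ∀ k, Subgroup (G (idx k)))

abbrev Ladder : Type v := Fin (n + 1) ⊕ Σ k, G (idx k) ⧸ N k

open scoped Classical in
noncomputable def cosetPerm (i : ι) (k : Fin n) : G i →* Perm (G (idx k) ⧸ N k) :=
  if h : idx k = i then h ▸ MulAction.toPermHom (G (idx k)) (G (idx k) ⧸ N k) else 1

noncomputable def cosetAction (i : ι) : G i →* Perm (Ladder idx N) :=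
  (Perm.sumCongrHom _ _).comp
    ((1 : G i →* Perm (Fin (n + 1))).prod
      ((Perm.sigmaCongrRightHom _).comp (MonoidHom.pi (cosetPerm idx N i))))

theorem cosetAction_inr (k : Fin n) (a : G (idx k)) (q : G (idx k) ⧸ N k) :
    cosetAction idx N (idx k) a (.inr ⟨k, q⟩) = .inr ⟨k, a • q⟩ := by
  simp [cosetAction, cosetPerm]

variable {idx N} {g : ∀ k, G (idx k)} (hg : ∀ k, g k ∉ N k)
  (hidx : ∀ k k' : Fin n, k.succ = k'.castSucc → idx k ≠ idx k')
include hg hidx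

theorem Ladder.exists_gluing_perm (i : ι) :
    ∃ τ : Perm (Ladder idx N), ∀ k, idx k = i →
      τ (.inr ⟨k, (1 : G (idx k))⟩) = .inl k.succ ∧ τ (.inr ⟨k, g k⟩) = .inl k.castSucc := by
  obtain ⟨τ, hτ⟩ := Perm.exists_extending_pair
    (Sum.elim (fun k : {k // idx k = i} => (.inr ⟨k, (1 : G (idx k))⟩ : Ladder idx N))
      fun k : {k // idx k = i} => .inr ⟨k, g k⟩)
    (Sum.elim (fun k : {k // idx k = i} => (.inl k.1.succ : Ladder idx N))
      fun k : {k // idx k = i} => .inl k.1.castSucc)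
    (Injective.sumElim (fun k k' h => Subtype.ext (congrArg Sigma.fst (Sum.inr_injective h)))
      (fun k k' h => Subtype.ext (congrArg Sigma.fst (Sum.inr_injective h))) fun k k' h => by
        obtain ⟨hk, hq⟩ := Sigma.mk.inj (Sum.inr_injective h)
        rw [Subtype.ext hk] at hq
        exact hg k' (by simpa [QuotientGroup.eq] using eq_of_heq hq))
    (Injective.sumElim (fun k k' h => Subtype.ext (Fin.succ_injective _ (Sum.inl_injective h)))
      (fun k k' h => Subtype.ext (Fin.castSucc_injective _ (Sum.inl_injective h))) fun k k' h =>
        hidx k k' (Sum.inl_injective h) (k.2.trans k'.2.symm))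
  exact ⟨τ, fun k hk => ⟨hτ (.inl ⟨k, hk⟩), hτ (.inr ⟨k, hk⟩)⟩⟩

theorem exists_hom_prod_ofFn_apply_last :
    ∃ φ : CoprodI G →* Perm (Ladder idx N),
      φ (List.ofFn fun k => of (g k)).prod (.inl (Fin.last n)) = .inl 0 := by
  choose τ hτ using Ladder.exists_gluing_perm hg hidx
  refine ⟨lift fun i => (MulAut.conj (τ i)).toMonoidHom.comp (cosetAction idx N i), ?_⟩
  rw [map_list_prod, List.map_ofFn, ← Perm.smul_def]
  refine List.prod_ofFn_smul_last _ (Sum.inl : _ → Ladder idx N) fun k => ?_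
  obtain ⟨hτ₁, hτ₂⟩ := hτ (idx k) k rfl
  have hτ₁' : (τ (idx k)).symm (.inl k.succ) = .inr ⟨k, (1 : G (idx k))⟩ :=
    (τ (idx k)).symm_apply_eq.mpr hτ₁.symm
  simp [Perm.smul_def, hτ₁', cosetAction_inr, hτ₂]

end Ladder

theorem Word.exists_perm_prod_ne_one [∀ i, Group.ResiduallyFinite (G i)] (w : Word G)
    (hw : w ≠ .empty) :
    ∃ (X : Type v) (_ : Finite X) (φ : CoprodI G →* Perm X), φ w.prod ≠ 1 := by
  set l := w.toList
  let idx (k : Fin l.length) : ι := l[k].1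
  let g (k : Fin l.length) : G (idx k) := l[k].2
  choose N hN hgN using fun k => Group.residuallyFinite_iff_exists_finiteIndex.mp
    inferInstance (g k) (w.ne_one _ (List.getElem_mem k.2))
  have hidx (k k' : Fin l.length) (h : k.succ = k'.castSucc) : idx k ≠ idx k' := by
    have hk : (k' : ℕ) = k + 1 := by simpa using (congrArg Fin.val h).symm
    simpa [idx, hk] using List.isChain_iff_getElem.mp w.chain_ne k (hk ▸ k'.2)
  obtain ⟨φ, hφ⟩ := exists_hom_prod_ofFn_apply_last hgN hidx
  refine ⟨Ladder idx N, inferInstance, φ, fun h => hw ?_⟩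
  have hprod : (List.ofFn fun k => of (g k)).prod = w.prod :=
    congrArg List.prod (List.ofFn_getElem_eq_map l fun p => of p.2)
  rw [hprod, h] at hφ
  have hl : l.length = 0 := by simpa [Fin.ext_iff] using hφ
  exact Word.ext (List.length_eq_zero_iff.mp hl)

open scoped Classical in
instance [∀ i, Group.ResiduallyFinite (G i)] : Group.ResiduallyFinite (CoprodI G) :=
  Group.residuallyFinite_of_forall_exists_finite_monoidHom fun x hx => by
    have hx' : (Word.equiv x).prod = x := Word.equiv.symm_apply_apply x
    obtain ⟨X, _, φ, hφ⟩ := (Word.equiv x).exists_perm_prod_ne_one fun h =>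
      hx (by rw [← hx', h, Word.prod_empty])
    exact ⟨Perm X, inferInstance, inferInstance, φ, hx' ▸ hφ⟩

end Monoid.CoprodI

namespace Monoid.Coprod

variable (G₁ : Type u) (G₂ : Type w) [Group G₁] [Group G₂]

abbrev ULiftFamily : Bool → Type (max u w) := fun b => cond b (ULift.{w} G₁) (ULift.{u} G₂)

instance : ∀ b, Group (ULiftFamily G₁ G₂ b)
  | true => inferInstanceAs (Group (ULift G₁))
  | false => inferInstanceAs (Group (ULift G₂))

instance [Group.ResiduallyFinite G₁] [Group.ResiduallyFinite G₂] :
    ∀ b, Group.ResiduallyFinite (ULiftFamily G₁ G₂ b)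
  | true => inferInstanceAs (Group.ResiduallyFinite (ULift G₁))
  | false => inferInstanceAs (Group.ResiduallyFinite (ULift G₂))

def toCoprodI : G₁ ∗ G₂ →* CoprodI (ULiftFamily G₁ G₂) :=
  lift ((CoprodI.of (i := true)).comp MulEquiv.ulift.symm.toMonoidHom)
    ((CoprodI.of (i := false)).comp MulEquiv.ulift.symm.toMonoidHom)

def ofCoprodI : CoprodI (ULiftFamily G₁ G₂) →* G₁ ∗ G₂ :=
  CoprodI.lift fun
    | true => inl.comp MulEquiv.ulift.toMonoidHom
    | false => inr.comp MulEquiv.ulift.toMonoidHom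

theorem ofCoprodI_toCoprodI (x : G₁ ∗ G₂) : ofCoprodI G₁ G₂ (toCoprodI G₁ G₂ x) = x :=
  DFunLike.congr_fun (show (ofCoprodI G₁ G₂).comp (toCoprodI G₁ G₂) = .id _ by ext <;> rfl) x

instance [Group.ResiduallyFinite G₁] [Group.ResiduallyFinite G₂] :
    Group.ResiduallyFinite (G₁ ∗ G₂) :=
  .of_injective (toCoprodI G₁ G₂) (LeftInverse.injective (ofCoprodI_toCoprodI G₁ G₂))

end Monoid.Coprod

/-- Gruenberg: A free product of two residually finite groups is
residually finite. -/
theorem freeProduct_residuallyFinite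
    (G₁ G₂ : Type*) [Group G₁] [Group G₂]
    (h₁ : ResiduallyFinite G₁) (h₂ : ResiduallyFinite G₂) :
    ResiduallyFinite (Monoid.Coprod G₁ G₂) := by
  rw [residuallyFinite_iff_group_residuallyFinite] at h₁ h₂ ⊢
  infer_instance
end

section
/- Let G be a group acting on a tree T (without inversions) such that every vertex stabilizer is trivial. Then G is a free group. -/
universe u v

/-!
Zorn's lemma gives a maximal connected set `M` of vertices meeting every orbit at most once. By
maximality and connectedness of `T` it meets every orbit, and by freeness its translates `g • M`
are pairwise disjoint; walking along `T` shows that the elements `s ≠ 1` for which `s • M` is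
joined to `M` by an edge generate `G`. Removing an edge cuts the tree into two branches. Choose
one element `s` of each pair `{s, s⁻¹}` (absence of inversions gives `s ≠ s⁻¹`): the branches
beyond the edges from `M` to `s • M` and to `s⁻¹ • M` are ping-pong sets for `s`, with `M`
outside all of them, so the chosen elements form a free basis.
-/

open scoped Pointwise Function

namespace SimpleGraph

variable {V V' : Type*} {G : SimpleGraph V} {G' : SimpleGraph V'} {N : Set V} {u v a c a' c' : V}

lemma Preconnected.eq_univ_of_forall_adj_mem (hG : G.Preconnected) {W : Set V}
    (hW : W.Nonempty) (hadj : ∀ ⦃x y⦄, G.Adj x y → x ∈ W → y ∈ W) : W = Set.univ := by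
  obtain ⟨w, hw⟩ := hW
  refine Set.eq_univ_of_forall fun z => by_contra fun hz => ?_
  obtain ⟨d, -, hd, hd'⟩ := (hG w z).some.exists_boundary_dart W hw hz
  exact hd' (hadj d.adj hd)

def branch (G : SimpleGraph V) (u v : V) : Set V :=
  {z | (G.deleteEdges {s(u, v)}).Reachable v z}

lemma mem_branch_self (u v : V) : v ∈ G.branch u v := Reachable.refl _

lemma induce_branch_preconnected (u v : V) : (G.induce (G.branch u v)).Preconnected := by
  have hsupp : G.branch u v = ((G.deleteEdges {s(u, v)}).connectedComponentMk v).supp := by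
    ext z
    simp only [branch, Set.mem_ofPred_eq, ConnectedComponent.mem_supp_iff,
      ConnectedComponent.eq, reachable_comm]
  rw [hsupp]
  intro x y
  exact ((ConnectedComponent.maximal_connected_induce_supp _).1.preconnected x y).map
    (⟨id, fun h => deleteEdges_le (G := G) _ h⟩ : induce _ (G.deleteEdges {s(u, v)}) →g induce _ G)

lemma subset_branch_of_preconnected (hN : (G.induce N).Preconnected) (hv : v ∈ N) (hu : u ∉ N) :
    N ⊆ G.branch u v := by
  intro z hz
  let f : G.induce N →g G.deleteEdges {s(u, v)} :=
    ⟨Subtype.val, fun {x y} h => by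
      refine deleteEdges_adj.2 ⟨h, fun he => hu ?_⟩
      rcases Sym2.eq_iff.1 (Set.mem_singleton_iff.1 he) with ⟨rfl, -⟩ | ⟨-, rfl⟩
      exacts [x.2, y.2]⟩
  exact (hN ⟨v, hv⟩ ⟨z, hz⟩).map f

lemma disjoint_branch_swap (hG : G.IsAcyclic) (h : G.Adj u v) :
    Disjoint (G.branch u v) (G.branch v u) := by
  refine Set.disjoint_left.2 fun z hvz huz => isAcyclic_iff_forall_adj_isBridge.1 hG h ?_
  rw [branch, Sym2.eq_swap] at huz
  exact huz.trans hvz.symm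

lemma compl_branch_subset (hG : G.Preconnected) (h : G.Adj u v) :
    (G.branch u v)ᶜ ⊆ G.branch v u := by
  suffices G.branch u v ∪ G.branch v u = Set.univ by
    intro z hz
    exact (this.ge (Set.mem_univ z)).resolve_left hz
  refine hG.eq_univ_of_forall_adj_mem ⟨v, .inl (mem_branch_self u v)⟩ fun x y hxy hx => ?_
  by_cases he : s(x, y) = s(u, v)
  · rcases Sym2.eq_iff.1 he with ⟨-, rfl⟩ | ⟨-, rfl⟩
    exacts [.inl (mem_branch_self u y), .inr (mem_branch_self v y)]
  · rcases hx with hx | hx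
    · exact .inl (hx.trans (deleteEdges_adj.2 ⟨hxy, he⟩).reachable)
    · refine .inr (hx.trans (deleteEdges_adj.2 ⟨hxy, ?_⟩).reachable)
      rwa [Set.mem_singleton_iff, Sym2.eq_swap (a := v)]

lemma map_mem_branch (f : G →g G') (hf : Function.Injective f) {z : V}
    (hz : z ∈ G.branch u v) : f z ∈ G'.branch (f u) (f v) := by
  let f' : G.deleteEdges {s(u, v)} →g G'.deleteEdges {s(f u, f v)} :=
    ⟨f, fun {x y} h => by
      obtain ⟨hxy, he⟩ := deleteEdges_adj.1 h
      refine deleteEdges_adj.2 ⟨f.map_adj hxy, fun he' => he ?_⟩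
      exact Sym2.map.injective hf (by simpa using he')⟩
  exact hz.map f'

lemma disjoint_branch_of_mem_of_notMem (hG : G.IsAcyclic) (hN : (G.induce N).Preconnected)
    (ha : a ∈ N) (hc : c ∉ N) (hac : G.Adj a c) : Disjoint N (G.branch a c) :=
  (disjoint_branch_swap hG hac.symm).mono_left (subset_branch_of_preconnected hN ha hc)

lemma disjoint_branch_of_ne (hG : G.IsAcyclic) (hN : (G.induce N).Preconnected)
    (ha : a ∈ N) (hc : c ∉ N) (hac : G.Adj a c) (ha' : a' ∈ N) (hc' : c' ∉ N)
    (hac' : G.Adj a' c') (hne : (a, c) ≠ (a', c')) :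
    Disjoint (G.branch a c) (G.branch a' c') := by
  have hc'_notMem : c' ∉ G.branch a c := by
    intro hmem
    refine Set.disjoint_left.1 (disjoint_branch_of_mem_of_notMem hG hN ha hc hac) ha' ?_
    refine hmem.trans (deleteEdges_adj.2 ⟨hac'.symm, fun he => ?_⟩).reachable
    rcases Sym2.eq_iff.1 (Set.mem_singleton_iff.1 he) with ⟨h, -⟩ | ⟨h, h'⟩
    · exact hc' (h ▸ ha)
    · exact hne (by rw [h, h'])
  have hK := connected_induce_union hN (induce_branch_preconnected a c) ha
    (mem_branch_self a c) hac
  have hKsub := subset_branch_of_preconnected hK.preconnected (.inl ha')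
    (show c' ∉ N ∪ G.branch a c by simp [hc', hc'_notMem])
  exact (disjoint_branch_swap hG hac'.symm).mono_left (Set.subset_union_right.trans hKsub)

end SimpleGraph

lemma exists_subset_union_inv_disjoint {G : Type*} [Group G] {S : Set G}
    (hS : ∀ s ∈ S, s⁻¹ ∈ S) (hS' : ∀ s ∈ S, s⁻¹ ≠ s) :
    ∃ R ⊆ S, S ⊆ R ∪ R⁻¹ ∧ Disjoint R R⁻¹ := by
  classical
  let : LinearOrder G := linearOrderOfSTO WellOrderingRel
  refine ⟨{s ∈ S | s < s⁻¹}, fun s hs => hs.1, fun s hs => ?_, ?_⟩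
  · rcases (hS' s hs).lt_or_gt with h | h
    · exact .inr ⟨hS s hs, by rwa [inv_inv]⟩
    · exact .inl ⟨hs, h⟩
  · refine Set.disjoint_left.2 fun r hr hr' => ?_
    have := hr'.2
    rw [inv_inv] at this
    exact lt_asymm hr.2 this

lemma not_isOfFinOrder_of_smul_compl_subset {G α : Type*} [Group G] [MulAction G α] {a : G}
    {X Y : Set α} (hXY : Disjoint X Y) (hX : a • Yᶜ ⊆ X) {z : α} (hzX : z ∉ X) (hzY : z ∉ Y) :
    ¬IsOfFinOrder a := by
  have hpow (n : ℕ) : a ^ (n + 1) • z ∈ X := by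
    induction n with
    | zero => simpa using hX (Set.smul_mem_smul_set hzY)
    | succ n ih =>
      rw [pow_succ', mul_smul]
      exact hX (Set.smul_mem_smul_set (Set.disjoint_left.1 hXY ih))
  rw [isOfFinOrder_iff_pow_eq_one]
  rintro ⟨n, hn, hpow1⟩
  obtain ⟨m, rfl⟩ := Nat.exists_eq_succ_of_ne_zero hn.ne'
  exact hzX (by simpa [hpow1] using hpow m)

lemma FreeGroup.injective_lift_of_unique {ι G : Type*} [Unique ι] [Group G] {a : ι → G}
    (ha : ¬IsOfFinOrder (a default)) : Function.Injective (FreeGroup.lift a) := by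
  intro x y hxy
  rw [← FreeGroup.equivIntOfUnique.symm_apply_apply x,
    ← FreeGroup.equivIntOfUnique.symm_apply_apply y] at hxy ⊢
  simp only [FreeGroup.equivIntOfUnique, Equiv.coe_fn_symm_mk, map_zpow,
    FreeGroup.lift_apply_of] at hxy ⊢
  rw [injective_zpow_iff_not_isOfFinOrder.2 ha hxy]

theorem FreeGroup.injective_lift_of_ping_pong_of_notMem {ι G : Type u} {α : Type*} [Group G]
    [MulAction G α] (a : ι → G) (X Y : ι → Set α) (hXnonempty : ∀ i, (X i).Nonempty)
    (hXdisj : Pairwise (Disjoint on X)) (hYdisj : Pairwise (Disjoint on Y))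
    (hXYdisj : ∀ i j, Disjoint (X i) (Y j)) (hX : ∀ i, a i • (Y i)ᶜ ⊆ X i)
    (hY : ∀ i, a⁻¹ i • (X i)ᶜ ⊆ Y i) {z : α} (hzX : ∀ i, z ∉ X i) (hzY : ∀ i, z ∉ Y i) :
    Function.Injective (FreeGroup.lift a) := by
  rcases subsingleton_or_nontrivial ι with _ | _
  · cases isEmpty_or_nonempty ι
    · exact Function.injective_of_subsingleton _
    · have : Unique ι := uniqueOfSubsingleton (Classical.arbitrary ι)
      exact injective_lift_of_unique
        (not_isOfFinOrder_of_smul_compl_subset (hXYdisj _ _) (hX _) (hzX _) (hzY _))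
  · exact FreeGroup.injective_lift_of_ping_pong a X Y hXnonempty hXdisj hYdisj hXYdisj hX hY

section Action

open SimpleGraph

variable {G : Type u} {V : Type*} [Group G] [MulAction G V] {T : SimpleGraph V} {M : Set V}

lemma smul_compl_branch_subset (hT : T.Preconnected)
    (hadj : ∀ (g : G) (u v : V), T.Adj u v → T.Adj (g • u) (g • v)) (g : G) {u v : V}
    (huv : T.Adj u v) : g • (T.branch u v)ᶜ ⊆ T.branch (g • v) (g • u) :=
  Set.smul_set_subset_iff.2 fun _ hz =>
    map_mem_branch ⟨(g • ·), hadj g _ _⟩ (MulAction.injective g) (compl_branch_subset hT huv hz)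

variable (G T) in
def IsSubtreeOfRepresentatives (M : Set V) : Prop :=
  (T.induce M).Connected ∧ ∀ (g : G), ∀ x ∈ M, g • x ∈ M → g • x = x

lemma exists_maximal_isSubtreeOfRepresentatives (v : V) :
    ∃ M, Maximal (IsSubtreeOfRepresentatives G T) M := by
  have hchains : ∀ c ⊆ {M | IsSubtreeOfRepresentatives G T M}, IsChain (· ⊆ ·) c →
      c.Nonempty → ∃ ub ∈ {M | IsSubtreeOfRepresentatives G T M}, ∀ s ∈ c, s ⊆ ub := by
    intro c hc hchain hne
    refine ⟨⋃₀ c, ⟨?_, ?_⟩, fun s hs => Set.subset_sUnion_of_mem hs⟩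
    · refine induce_sUnion_connected_of_pairwise_not_disjoint hne (fun {s t} hs ht => ?_)
        (fun hs => (hc hs).1)
      rcases hchain.total hs ht with hst | hts
      · rw [Set.inter_eq_left.2 hst]
        exact Set.nonempty_coe_sort.1 (hc hs).1.nonempty
      · rw [Set.inter_eq_right.2 hts]
        exact Set.nonempty_coe_sort.1 (hc ht).1.nonempty
    · rintro g x ⟨s, hs, hx⟩ ⟨t, ht, hgx⟩
      rcases hchain.total hs ht with hst | hts
      exacts [(hc ht).2 g x (hst hx) hgx, (hc hs).2 g x hx (hts hgx)]
  obtain ⟨M, -, hM⟩ := zorn_subset_nonempty _ hchains {v} ⟨by simp, by simp⟩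
  exact ⟨M, hM⟩

namespace IsSubtreeOfRepresentatives

lemma exists_smul_mem_of_maximal (hT : T.Preconnected)
    (hadj : ∀ (g : G) (u v : V), T.Adj u v → T.Adj (g • u) (g • v))
    (hM : Maximal (IsSubtreeOfRepresentatives G T) M) (v : V) : ∃ g : G, g • v ∈ M := by
  obtain ⟨m, hm⟩ := Set.nonempty_coe_sort.1 hM.1.1.nonempty
  have hcover := hT.eq_univ_of_forall_adj_mem (W := {v | ∃ g : G, g • v ∈ M})
    ⟨m, 1, by simpa using hm⟩ ?_
  · exact hcover.ge (Set.mem_univ v)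
  rintro x y hxy ⟨g, hgx⟩
  refine by_contra fun hy' => ?_
  have hy (k : G) : k • y ∉ M := fun hk => hy' ⟨k, hk⟩
  have hins : IsSubtreeOfRepresentatives G T (insert (g • y) M) := by
    refine ⟨?_, ?_⟩
    · rw [← Set.union_singleton]
      exact connected_induce_union hM.1.1.preconnected (by simp) hgx (Set.mem_singleton _)
        (hadj g _ _ hxy)
    · rintro h x' (rfl | hx') (hhx' | hhx')
      · exact hhx'
      · exact absurd (by rwa [← mul_smul] at hhx') (hy (h * g))
      · exact absurd (by rw [mul_smul, ← hhx', inv_smul_smul]; exact hx') (hy (h⁻¹ * g))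
      · exact hM.1.2 h x' hx' hhx'
  exact hy g (hM.2 hins (Set.subset_insert _ _) (Set.mem_insert _ _))

lemma eq_of_smul_eq_smul (hfree : ∀ (g : G) (v : V), g • v = v → g = 1)
    (hM : IsSubtreeOfRepresentatives G T M) {g h : G} {x y : V} (hx : x ∈ M) (hy : y ∈ M)
    (hxy : g • x = h • y) : g = h := by
  have hy' : (h⁻¹ * g) • x = y := by rw [mul_smul, hxy, inv_smul_smul]
  exact (inv_mul_eq_one.1 (hfree _ x (hM.2 _ x hx (hy' ▸ hy)))).symm

end IsSubtreeOfRepresentatives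

variable (G T) in
def adjacentTranslates (M : Set V) : Set G :=
  {g | g ≠ 1 ∧ ∃ a ∈ M, ∃ b ∈ M, T.Adj a (g • b)}

lemma inv_mem_adjacentTranslates
    (hadj : ∀ (g : G) (u v : V), T.Adj u v → T.Adj (g • u) (g • v)) {s : G}
    (hs : s ∈ adjacentTranslates G T M) : s⁻¹ ∈ adjacentTranslates G T M := by
  obtain ⟨hs1, a, ha, b, hb, hab⟩ := hs
  exact ⟨inv_ne_one.2 hs1, b, hb, a, ha, by simpa using (hadj s⁻¹ _ _ hab).symm⟩

lemma closure_adjacentTranslates_eq_top (hT : T.Preconnected)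
    (hadj : ∀ (g : G) (u v : V), T.Adj u v → T.Adj (g • u) (g • v))
    (hfree : ∀ (g : G) (v : V), g • v = v → g = 1)
    (hM : IsSubtreeOfRepresentatives G T M) (hcover : ∀ v, ∃ g : G, g • v ∈ M) :
    Subgroup.closure (adjacentTranslates G T M) = ⊤ := by
  set H := Subgroup.closure (adjacentTranslates G T M)
  obtain ⟨m, hm⟩ := Set.nonempty_coe_sort.1 hM.1.nonempty
  have hW := hT.eq_univ_of_forall_adj_mem (W := {v | ∃ h ∈ H, h • v ∈ M})
    ⟨m, 1, H.one_mem, by simpa using hm⟩ ?_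
  · refine eq_top_iff.2 fun g _ => ?_
    obtain ⟨h, hh, hgm⟩ := hW.ge (Set.mem_univ (g⁻¹ • m))
    have : h * g⁻¹ = 1 := hM.eq_of_smul_eq_smul hfree hm hgm (by rw [mul_smul, one_smul])
    rwa [mul_inv_eq_one.1 this] at hh
  rintro x y hxy ⟨h, hh, hx⟩
  obtain ⟨g, hg⟩ := hcover y
  have hadj' : T.Adj (h • x) ((h * g⁻¹) • g • y) := by
    simpa [mul_smul] using hadj h _ _ hxy
  have ht : h * g⁻¹ ∈ H := by
    by_cases h1 : h * g⁻¹ = 1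
    · exact h1 ▸ H.one_mem
    · exact Subgroup.subset_closure ⟨h1, _, hx, _, hg, hadj'⟩
  exact ⟨g, by simpa using H.mul_mem (H.inv_mem ht) hh, hg⟩

lemma inv_ne_self_of_mem_adjacentTranslates (hT : T.IsTree)
    (hadj : ∀ (g : G) (u v : V), T.Adj u v → T.Adj (g • u) (g • v))
    (hninv : ∀ (g : G) (u v : V), T.Adj u v → g • u = v → ¬ g • v = u)
    (hfree : ∀ (g : G) (v : V), g • v = v → g = 1)
    (hM : IsSubtreeOfRepresentatives G T M) {s : G} (hs : s ∈ adjacentTranslates G T M) :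
    s⁻¹ ≠ s := by
  intro hinv
  obtain ⟨hs1, a, ha, b, hb, hab⟩ := hs
  have hss (x : V) : s • s • x = x := by
    nth_rw 1 [← hinv]
    exact inv_smul_smul s x
  have hba : T.Adj b (s • a) := by
    simpa only [hss] using (hadj s _ _ hab).symm
  -- Both edges `(a, s • b)` and `(b, s • a)` join `M` to `s • M`; if they were distinct, their
  -- branches would be disjoint, yet both contain `s • a`.
  by_cases heq : (a, s • b) = (b, s • a)
  · obtain ⟨rfl, -⟩ := Prod.mk.inj heq
    exact hninv s a (s • a) hab rfl (hss a)
  have hsb : s • b ∉ M := fun h => hs1 (hM.eq_of_smul_eq_smul hfree hb h (one_smul G _).symm)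
  have hsa : s • a ∉ M := fun h => hs1 (hM.eq_of_smul_eq_smul hfree ha h (one_smul G _).symm)
  have hsa_mem : s • a ∈ T.branch a (s • b) := by
    have hsub := smul_compl_branch_subset hT.connected.preconnected hadj s hba
    rw [hss] at hsub
    exact hsub (Set.smul_mem_smul_set (Set.disjoint_left.1
      (disjoint_branch_of_mem_of_notMem hT.isAcyclic hM.1.preconnected hb hsa hba) ha))
  exact Set.disjoint_left.1 (disjoint_branch_of_ne hT.isAcyclic hM.1.preconnected ha hsb hab
    hb hsa hba heq) hsa_mem (mem_branch_self b (s • a))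

theorem injective_lift_of_subset_adjacentTranslates (hT : T.IsTree)
    (hadj : ∀ (g : G) (u v : V), T.Adj u v → T.Adj (g • u) (g • v))
    (hfree : ∀ (g : G) (v : V), g • v = v → g = 1)
    (hM : IsSubtreeOfRepresentatives G T M) {R : Set G} (hR : R ⊆ adjacentTranslates G T M)
    (hRinv : Disjoint R R⁻¹) : Function.Injective (FreeGroup.lift ((↑) : R → G)) := by
  choose a ha b hb hab using fun s : R => (hR s.2).2
  have hsb (s : R) : (s : G) • b s ∉ M := fun h =>
    (hR s.2).1 (hM.eq_of_smul_eq_smul hfree (hb s) h (one_smul G _).symm)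
  have hsa (s : R) : (s : G)⁻¹ • a s ∉ M := fun h =>
    inv_ne_one.2 (hR s.2).1 (hM.eq_of_smul_eq_smul hfree (ha s) h (one_smul G _).symm)
  have hba (s : R) : T.Adj (b s) ((s : G)⁻¹ • a s) := by
    simpa using (hadj (s : G)⁻¹ _ _ (hab s)).symm
  obtain ⟨m, hm⟩ := Set.nonempty_coe_sort.1 hM.1.nonempty
  have hTa := hT.isAcyclic
  have hMc := hM.1.preconnected
  refine FreeGroup.injective_lift_of_ping_pong_of_notMem _
    (fun s => T.branch (a s) ((s : G) • b s)) (fun s => T.branch (b s) ((s : G)⁻¹ • a s))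
    (fun s => ⟨_, mem_branch_self _ _⟩) (fun s t hst => ?_) (fun s t hst => ?_)
    (fun s t => ?_) (fun s => ?_) (fun s => ?_) (z := m)
    (fun s => Set.disjoint_left.1
      (disjoint_branch_of_mem_of_notMem hTa hMc (ha s) (hsb s) (hab s)) hm)
    (fun s => Set.disjoint_left.1
      (disjoint_branch_of_mem_of_notMem hTa hMc (hb s) (hsa s) (hba s)) hm)
  · refine disjoint_branch_of_ne hTa hMc (ha s) (hsb s) (hab s) (ha t) (hsb t) (hab t)
      fun h => hst ?_
    exact Subtype.ext (hM.eq_of_smul_eq_smul hfree (hb s) (hb t) (Prod.mk.inj h).2)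
  · refine disjoint_branch_of_ne hTa hMc (hb s) (hsa s) (hba s) (hb t) (hsa t) (hba t)
      fun h => hst ?_
    exact Subtype.ext (inv_injective
      (hM.eq_of_smul_eq_smul hfree (ha s) (ha t) (Prod.mk.inj h).2))
  · refine disjoint_branch_of_ne hTa hMc (ha s) (hsb s) (hab s) (hb t) (hsa t) (hba t)
      fun h => ?_
    have hst : (s : G) = (t : G)⁻¹ :=
      hM.eq_of_smul_eq_smul hfree (hb s) (ha t) (Prod.mk.inj h).2
    refine Set.disjoint_left.1 hRinv s.2 ?_
    rw [Set.mem_inv, hst, inv_inv]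
    exact t.2
  · simpa using smul_compl_branch_subset hT.connected.preconnected hadj (s : G) (hba s)
  · simpa using smul_compl_branch_subset hT.connected.preconnected hadj (s : G)⁻¹ (hab s)

end Action

/-- If a group `G` acts (without inversions) on a tree `T` with trivial
vertex stabilizers, then `G` is a free group. -/
theorem free_of_free_action_on_tree
    (G : Type u) (V : Type v) [Group G] [MulAction G V]
    (T : SimpleGraph V) (hT : T.IsTree)
    (hadj : ∀ (g : G) (u v : V), T.Adj u v → T.Adj (g • u) (g • v))
    (hninv : ∀ (g : G) (u v : V), T.Adj u v → g • u = v → ¬ g • v = u)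
    (hfree : ∀ (g : G) (v : V), g • v = v → g = 1) :
    ∃ S : Type u, Nonempty (G ≃* FreeGroup S) := by
  obtain ⟨v⟩ := hT.connected.nonempty
  obtain ⟨M, hMmax⟩ := exists_maximal_isSubtreeOfRepresentatives (G := G) (T := T) v
  have hM : IsSubtreeOfRepresentatives G T M := hMmax.1
  have hgen := closure_adjacentTranslates_eq_top hT.connected.preconnected hadj hfree hM
    (IsSubtreeOfRepresentatives.exists_smul_mem_of_maximal hT.connected.preconnected hadj hMmax)
  obtain ⟨R, hRS, hSR, hRinv⟩ := exists_subset_union_inv_disjoint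
    (fun _ hs => inv_mem_adjacentTranslates hadj hs)
    (fun _ hs => inv_ne_self_of_mem_adjacentTranslates hT hadj hninv hfree hM hs)
  have hsurj : Function.Surjective (FreeGroup.lift ((↑) : R → G)) := by
    rw [← MonoidHom.range_eq_top, FreeGroup.range_lift_eq_closure, Subtype.range_coe,
      eq_top_iff, ← hgen, Subgroup.closure_le]
    refine hSR.trans (Set.union_subset Subgroup.subset_closure fun s hs => ?_)
    simpa using (Subgroup.closure R).inv_mem (Subgroup.subset_closure hs)
  exact ⟨R, ⟨(MulEquiv.ofBijective _
    ⟨injective_lift_of_subset_adjacentTranslates hT hadj hfree hM hRS hRinv, hsurj⟩).symm⟩⟩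
end
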